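/- For all integers k and l, the class of t^k d(t^l u) in Ω_R/dR equals μ_{k,l} ω₁. -/

import Mathlib

noncomputable section

set_option synthInstance.maxHeartbeats 1000000
set_option maxHeartbeats 1000000

open Polynomial

/-- The polynomial `u² - (t² + 4t)` over the Laurent polynomial ring `ℂ[t,t⁻¹]`. -/
def threePoly : Polynomial (LaurentPolynomial ℂ) :=
  Polynomial.X ^ 2 - Polynomial.C (LaurentPolynomial.T 2 + 4 * LaurentPolynomial.T 1)

/-- The three-point ring `R = ℂ[t, t⁻¹, u | u² = t² + 4t]`, i.e. the quotient of
`ℂ[t,t⁻¹][u]` by the ideal generated by `u² - t² - 4t`. -/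
abbrev R3 : Type := AdjoinRoot threePoly

/-- `t^k` in `R3`, for `k : ℤ`. -/
def tp (k : ℤ) : R3 := AdjoinRoot.of threePoly (LaurentPolynomial.T k)

/-- the element `t` of `R`. -/
def tR : R3 := tp 1

/-- the element `t⁻¹` of `R`. -/
def tInv : R3 := tp (-1)

/-- the element `u` of `R`. -/
def uR : R3 := AdjoinRoot.root threePoly

abbrev ΩR : Type := KaehlerDifferential ℂ R3

/-- the universal derivation `d : R → Ω_R`. -/
def DR : Derivation ℂ R3 ΩR := KaehlerDifferential.D ℂ R3

/-- the `ℂ`-subspace `dR ⊆ Ω_R` of exact differentials. -/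
def dRsub : Submodule ℂ ΩR := LinearMap.range (DR.toLinearMap)

/-- the quotient `Ω_R/dR`. -/
abbrev ΩRq : Type := ΩR ⧸ dRsub

/-- the class of an element of `Ω_R` in `Ω_R/dR`. -/
def clsR (x : ΩR) : ΩRq := Submodule.Quotient.mk (p := dRsub) x

/-- `ω₀`, the class of `t⁻¹ dt`. -/
def ω0 : ΩRq := clsR (tInv • DR tR)

/-- `ω₁`, the class of `t⁻¹u dt`. -/
def ω1 : ΩRq := clsR ((tInv * uR) • DR tR)

/-- The extended double factorial, as a complex number: `n!!` for `n ≥ 0`, with the conventions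
`(-1)!! = 1` and `(-3)!! = -1`. -/
def dfac (n : ℤ) : ℂ :=
  if n = -1 then 1 else if n = -3 then -1 else (Nat.doubleFactorial n.toNat : ℂ)

/-- `μ_{k,l} = 0` for `k + l ≤ -2`, and
`μ_{k,l} = k·(-1)^{k+l+1}·2^{k+l}·(2(k+l)-1)!!/(k+l+1)!` for `k + l ≥ -1`. -/
def μ (k l : ℤ) : ℂ :=
  if k + l ≤ -2 then 0
  else (k : ℂ) * (-1 : ℂ) ^ (k + l + 1) * (2 : ℂ) ^ (k + l) * dfac (2 * (k + l) - 1) /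
    (Nat.factorial (k + l + 1).toNat : ℂ)

/-!
Write `θ_s = uForm s` for the class of `t^s u dt/t`, so that `θ_0 = ω₁`. Since `d(t^{k+l} u)` is
exact, the Leibniz rule gives `t^k d(t^l u) ≡ -k θ_{k+l}`. Differentiating `u² = t² + 4t` gives
`u du = (t² + 2t) dt/t`, and then exactness of `d(t^{s-1} u³)` yields the recurrence
`(s+2) θ_{s+1} + (4s+2) θ_s = 0`. As `4s+2` never vanishes and `s+2` does not for `s ≥ 0`, this
recurrence determines every `θ_s` from `θ_0`. Its solution is `θ_s = κ_s ω₁` with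
`κ_s = signedCatalan s`, which is `(-1)^s` times the `s`-th Catalan number for `s ≥ 0`, is `1/2` at
`s = -1` and vanishes for `s ≤ -2`.
-/

section

variable {K V : Type*} [Field K] [CharZero K] [AddCommGroup V] [Module K V]

variable (K) in
def SignedCatalanRec (x : ℤ → V) : Prop :=
  ∀ s : ℤ, ((s : K) + 2) • x (s + 1) + (4 * (s : K) + 2) • x s = 0

namespace SignedCatalanRec

theorem eq_zero {x : ℤ → V} (hx : SignedCatalanRec K x) (h0 : x 0 = 0) (s : ℤ) : x s = 0 := by
  induction s using Int.inductionOn' (b := 0) with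
  | zero => exact h0
  | succ s hs ih =>
    have hne : (s : K) + 2 ≠ 0 := by exact_mod_cast (by omega : s + 2 ≠ 0)
    simpa [ih, hne] using hx s
  | pred s hs ih =>
    have hne : 4 * ((s : K) - 1) + 2 ≠ 0 := by exact_mod_cast (by omega : 4 * (s - 1) + 2 ≠ 0)
    simpa [ih, hne] using hx (s - 1)

theorem eq_smul {x : ℤ → V} {c : ℤ → K} (hx : SignedCatalanRec K x) (hc : SignedCatalanRec K c)
    (hc0 : c 0 = 1) (s : ℤ) : x s = c s • x 0 := by
  have hy : SignedCatalanRec K (fun s => x s - c s • x 0) := fun s => by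
    have hcs := hc s
    simp only [smul_eq_mul] at hcs
    rw [smul_sub, smul_sub, smul_smul, smul_smul, sub_add_sub_comm, hx s, ← add_smul, hcs,
      zero_smul, sub_zero]
  exact sub_eq_zero.mp (hy.eq_zero (by rw [hc0, one_smul, sub_self]) s)

end SignedCatalanRec

end

lemma tp_add (a b : ℤ) : tp (a + b) = tp a * tp b := by
  rw [tp, tp, tp, LaurentPolynomial.T_add, map_mul]

lemma tp_zero : tp 0 = 1 := by
  rw [tp, LaurentPolynomial.T_zero, map_one]

lemma uR_sq : uR ^ 2 = tp 2 + 4 * tp 1 := by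
  have h : AdjoinRoot.mk threePoly (X ^ 2 - C (LaurentPolynomial.T 2
      + 4 * LaurentPolynomial.T 1)) = 0 := AdjoinRoot.mk_self
  rw [map_sub, map_pow, AdjoinRoot.mk_X, AdjoinRoot.mk_C, sub_eq_zero] at h
  rw [uR, h, tp, tp, map_add, map_mul, map_ofNat]

def dlogT : ΩR := tInv • DR tR

lemma tp_smul_dlogT (k : ℤ) : tp k • dlogT = tp (k - 1) • DR tR := by
  rw [dlogT, smul_smul, tInv, ← tp_add, sub_eq_add_neg]

lemma DR_tp (n : ℤ) : DR (tp n) = n • tp n • dlogT := by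
  set f : ℤ → ΩR := fun m => DR (tp m) - m • tp m • dlogT
  have hf : ∀ m, f (m + 1) = tp 1 • f m := by
    intro m
    simp only [f]
    rw [tp_add, Derivation.leibniz, ← tp_add, smul_sub, smul_comm (tp 1) m, smul_smul, ← tp_add,
      tp_smul_dlogT, tp_smul_dlogT, add_sub_cancel_right, add_sub_cancel_left, add_smul,
      one_smul]
    change tp m • DR tR + _ - _ = _
    abel
  have hf0 : f 0 = 0 := by simp [f, tp_zero]
  suffices ∀ n, f n = 0 from sub_eq_zero.mp (this n)
  intro n
  induction n using Int.induction_on with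
  | zero => exact hf0
  | succ i ih => rw [hf, ih, smul_zero]
  | pred i ih =>
    have h := hf (-i - 1)
    rw [sub_add_cancel, ih] at h
    calc f (-i - 1) = tp (-1) • tp 1 • f (-i - 1) := by
          rw [smul_smul, ← tp_add, neg_add_cancel, tp_zero, one_smul]
      _ = 0 := by rw [← h, smul_zero]

lemma tp_smul_DR (k : ℤ) (x : R3) : tp k • DR x = DR (tp k * x) - k • (tp k * x) • dlogT := by
  rw [Derivation.leibniz, DR_tp, smul_comm x k, smul_smul, mul_comm, add_sub_cancel_right]

lemma uR_smul_DR_uR : uR • DR uR = (tp 2 + 2 * tp 1) • dlogT := by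
  have h4 : DR 4 = 0 := by simpa using DR.map_natCast 4
  have h := congrArg DR uR_sq
  rw [Derivation.leibniz_pow, map_add, Derivation.leibniz, h4, smul_zero, add_zero, DR_tp,
    DR_tp, Nat.add_one_sub_one, pow_one] at h
  apply smul_right_injective ΩR (two_ne_zero : (2 : ℂ) ≠ 0)
  simp only [two_smul]
  linear_combination (norm := module) h

def uForm (s : ℤ) : ΩRq := clsR ((tp s * uR) • dlogT)

lemma uForm_zero : uForm 0 = ω1 := by
  rw [uForm, ω1, dlogT, smul_smul, tp_zero, one_mul, mul_comm]

lemma clsR_DR (f : R3) : clsR (DR f) = 0 :=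
  (Submodule.Quotient.mk_eq_zero _).mpr ⟨f, rfl⟩

lemma clsR_tp_smul_DR_tp_mul_uR (k l : ℤ) :
    clsR (tp k • DR (tp l * uR)) = (-k : ℂ) • uForm (k + l) := by
  rw [tp_smul_DR, ← mul_assoc, ← tp_add, clsR, Submodule.Quotient.mk_sub, ← clsR, clsR_DR,
    zero_sub, Submodule.Quotient.mk_smul, ← clsR, ← uForm, neg_smul, Int.cast_smul_eq_zsmul]

lemma DR_tp_mul_uR_cube (s : ℤ) :
    DR (tp (s - 1) * uR ^ 3) =
      (s + 2) • (tp (s + 1) * uR) • dlogT + (4 * s + 2) • (tp s * uR) • dlogT := by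
  rw [Derivation.leibniz, Derivation.leibniz_pow, DR_tp, show 3 - 1 = 2 from rfl, pow_two,
    mul_smul, uR_smul_DR_uR, show s + 1 = s - 1 + 2 by ring, tp_add,
    show tp s = tp (s - 1) * tp 1 by rw [← tp_add, sub_add_cancel]]
  match_scalars
  linear_combination (s - 1 : R3) * tp (s - 1) * uR * uR_sq

lemma signedCatalanRec_uForm : SignedCatalanRec ℂ uForm := fun s => by
  have hs₁ : ((s : ℂ) + 2) = ((s + 2 : ℤ) : ℂ) := by push_cast; rfl
  have hs₂ : (4 * (s : ℂ) + 2) = ((4 * s + 2 : ℤ) : ℂ) := by push_cast; rfl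
  rw [← clsR_DR (tp (s - 1) * uR ^ 3), DR_tp_mul_uR_cube, hs₁, hs₂, Int.cast_smul_eq_zsmul,
    Int.cast_smul_eq_zsmul]
  rfl

def signedCatalan (s : ℤ) : ℂ :=
  if s ≤ -2 then 0 else (-1) ^ s * 2 ^ s * dfac (2 * s - 1) / (s + 1).toNat.factorial

lemma signedCatalan_zero : signedCatalan 0 = 1 := by
  norm_num [signedCatalan, dfac]

lemma μ_eq_neg_mul_signedCatalan (k l : ℤ) : μ k l = -k * signedCatalan (k + l) := by
  rw [μ, signedCatalan]
  split_ifs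
  · ring
  · rw [zpow_add_one₀ (by norm_num)]
    ring

lemma dfac_natCast (n : ℕ) : dfac n = n.doubleFactorial := by
  rw [dfac, if_neg (by omega), if_neg (by omega), Int.toNat_natCast]

lemma dfac_two_mul_add_one {s : ℤ} (hs : -1 ≤ s) :
    dfac (2 * s + 1) = (2 * s + 1) * dfac (2 * s - 1) := by
  obtain ⟨n, rfl⟩ : ∃ n : ℕ, s = n - 1 := ⟨(s + 1).toNat, by omega⟩
  rcases n with _ | _ | n
  · norm_num [dfac]
  · norm_num [dfac]
  · rw [show 2 * ((n + 2 : ℕ) - 1 : ℤ) + 1 = (2 * n + 3 : ℕ) by push_cast; ring,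
      show 2 * ((n + 2 : ℕ) - 1 : ℤ) - 1 = (2 * n + 1 : ℕ) by push_cast; ring]
    rw [dfac_natCast, dfac_natCast, Nat.doubleFactorial_add_two]
    push_cast
    ring

lemma signedCatalanRec_signedCatalan : SignedCatalanRec ℂ signedCatalan := by
  intro s
  obtain hs | rfl | hs : s ≤ -3 ∨ s = -2 ∨ -1 ≤ s := by omega
  · simp [signedCatalan, show s + 1 ≤ -2 by omega, show s ≤ -2 by omega]
  · norm_num [signedCatalan]
  · have hs₂ : (s : ℂ) + 2 ≠ 0 := by exact_mod_cast (by omega : s + 2 ≠ 0)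
    have hfac : ((s + 1 + 1).toNat.factorial : ℂ) = ((s : ℂ) + 2) * (s + 1).toNat.factorial := by
      rw [show (s + 1 + 1).toNat = (s + 1).toNat + 1 by omega, Nat.factorial_succ]
      rw [Nat.cast_mul, ← Int.cast_natCast, Nat.cast_succ, Int.toNat_of_nonneg (by omega)]
      push_cast
      ring
    rw [signedCatalan, signedCatalan, if_neg (by omega), if_neg (by omega), hfac,
      show 2 * (s + 1) - 1 = 2 * s + 1 by ring, dfac_two_mul_add_one hs,
      zpow_add_one₀ (by norm_num), zpow_add_one₀ (by norm_num), smul_eq_mul, smul_eq_mul]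
    field_simp
    ring

/-- For all integers `k` and `l`, the class of `t^k d(t^l u)` in `Ω_R/dR` equals `μ_{k,l} ω₁`. -/
theorem stmt_11 (k l : ℤ) :
    clsR (tp k • DR (tp l * uR)) = μ k l • ω1 := by
  rw [clsR_tp_smul_DR_tp_mul_uR,
    signedCatalanRec_uForm.eq_smul signedCatalanRec_signedCatalan signedCatalan_zero,
    uForm_zero, smul_smul, μ_eq_neg_mul_signedCatalan]

end
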